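/- Let 1 < p ≤ 2 and δ ≥ 0, and let φ_a be the shifted N-functions associated with φ'(t) = (δ+t)^{p-2}t. Then there exists a constant c depending only on p such that for all symmetric 3×3 matrices P, Q: |F(P) − F(Q)|² ≤ c·φ_{|P|}(|P − Q|) and φ_{|P|}(|P−Q|) ≤ c·|F(P)−F(Q)|², where F(P) := (δ+|P|)^{(p-2)/2}P. -/

import Mathlib

open scoped BigOperators

noncomputable def normF (P : Matrix (Fin 3) (Fin 3) ℝ) : ℝ :=
  Real.sqrt (∑ i, ∑ j, (P i j) ^ 2)

noncomputable def Fmap (p δ : ℝ) (P : Matrix (Fin 3) (Fin 3) ℝ) :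
    Matrix (Fin 3) (Fin 3) ℝ :=
  ((δ + normF P) ^ ((p - 2) / 2)) • P

noncomputable def phiN' (p δ t : ℝ) : ℝ := (δ + t) ^ (p - 2) * t

noncomputable def phiShift (p δ a t : ℝ) : ℝ :=
  ∫ s in (0:ℝ)..t, phiN' p δ (a + s) * (s / (a + s))

open Real

lemma sq_rpow' {y : ℝ} (hy : 0 ≤ y) (e : ℝ) : (y ^ e) ^ 2 = y ^ (2 * e) := by
  rw [← Real.rpow_natCast (y ^ e) 2, ← Real.rpow_mul hy]
  norm_num [mul_comm]

lemma rpow_half_bound {e x y : ℝ} (he1 : -1 ≤ e) (he2 : e ≤ 0) (hy : 0 < y) (hxy : y ≤ 2 * x) :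
    x ^ e ≤ 2 * y ^ e := by
  have hx : 0 < x := by linarith
  have h1 : x ^ e ≤ (y / 2) ^ e :=
    Real.rpow_le_rpow_of_nonpos (by positivity) (by linarith) he2
  have h2 : (y / 2) ^ e = y ^ e * (2:ℝ) ^ (-e) := by
    rw [Real.div_rpow hy.le (by norm_num), Real.rpow_neg (by norm_num : (0:ℝ) ≤ 2)]
    ring
  have h3 : (2:ℝ) ^ (-e) ≤ 2 := by
    calc (2:ℝ) ^ (-e) ≤ (2:ℝ) ^ (1:ℝ) :=
          Real.rpow_le_rpow_of_exponent_le (by norm_num) (by linarith)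
      _ = 2 := Real.rpow_one 2
  have h4 : 0 ≤ y ^ e := Real.rpow_nonneg hy.le e
  calc x ^ e ≤ y ^ e * (2:ℝ) ^ (-e) := h1.trans_eq h2
    _ ≤ y ^ e * 2 := mul_le_mul_of_nonneg_left h3 h4
    _ = 2 * y ^ e := by ring

lemma rpow_mul_eq {c e t : ℝ} (hc : 0 ≤ c) (he1 : -1 < e) (ht : 0 ≤ t) :
    (c + t) ^ e * t = (t / (c + t)) ^ (-e) * t ^ (1 + e) := by
  rcases eq_or_lt_of_le ht with h | h
  · rw [← h]
    rw [Real.zero_rpow (by linarith : 1 + e ≠ 0)]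
    simp
  · have hct : 0 < c + t := by linarith
    symm
    calc (t / (c + t)) ^ (-e) * t ^ (1 + e)
        = t ^ (-e) / (c + t) ^ (-e) * t ^ (1 + e) := by rw [Real.div_rpow h.le hct.le]
      _ = (c + t) ^ e * (t ^ (-e) * t ^ (1 + e)) := by
          rw [Real.rpow_neg hct.le]
          field_simp
      _ = (c + t) ^ e * t := by rw [← Real.rpow_add h]; norm_num

lemma monotoneOn_rpow_mul {c e : ℝ} (hc : 0 ≤ c) (he1 : -1 < e) (he2 : e ≤ 0) :
    MonotoneOn (fun t => (c + t) ^ e * t) (Set.Ici (0:ℝ)) := by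
  intro t1 ht1 t2 ht2 h12
  simp only [Set.mem_Ici] at ht1 ht2
  simp only
  rw [rpow_mul_eq hc he1 ht1, rpow_mul_eq hc he1 ht2]
  have hdiv : t1 / (c + t1) ≤ t2 / (c + t2) := by
    rcases eq_or_lt_of_le (by linarith : (0:ℝ) ≤ c + t1) with h | h
    · have ht10 : t1 = 0 := by linarith
      simp [ht10]
      positivity
    · rw [div_le_div_iff₀ h (by linarith : (0:ℝ) < c + t2)]
      nlinarith
  have h1 : (t1 / (c + t1)) ^ (-e) ≤ (t2 / (c + t2)) ^ (-e) :=
    Real.rpow_le_rpow (by positivity) hdiv (by linarith)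
  have h2 : t1 ^ (1 + e) ≤ t2 ^ (1 + e) := Real.rpow_le_rpow ht1 h12 (by linarith)
  exact mul_le_mul h1 h2 (Real.rpow_nonneg ht1 _) (Real.rpow_nonneg (by positivity) _)

section scalar
variable {p δ a b : ℝ}

lemma fmono (hp : 1 < p) (hp2 : p ≤ 2) (hδ : 0 ≤ δ) (hb : 0 ≤ b) (hba : b ≤ a) :
    (δ + b) ^ ((p-2)/2) * b ≤ (δ + a) ^ ((p-2)/2) * a := by
  have := monotoneOn_rpow_mul (c := δ) (e := (p-2)/2) hδ (by linarith) (by linarith)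
    (Set.mem_Ici.mpr hb) (Set.mem_Ici.mpr (hb.trans hba)) hba
  simpa using this

lemma sum_up (hp : 1 < p) (hp2 : p ≤ 2) (hδ : 0 ≤ δ) (hb : 0 ≤ b) (hba : b ≤ a) :
    (δ + a) ^ ((p-2)/2) * a + (δ + b) ^ ((p-2)/2) * b
      ≤ 4 * (δ + a + b) ^ ((p-2)/2) * (a + b) := by
  have ha : 0 ≤ a := hb.trans hba
  rcases eq_or_lt_of_le (by linarith : (0:ℝ) ≤ δ + a) with h0 | h0
  · have hδ0 : δ = 0 := by linarith
    have ha0 : a = 0 := by linarith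
    have hb0 : b = 0 := by linarith
    subst hδ0; subst ha0; subst hb0; simp
  · have hfb := fmono hp hp2 hδ hb hba
    have hha : (δ + a) ^ ((p-2)/2) ≤ 2 * (δ + a + b) ^ ((p-2)/2) :=
      rpow_half_bound (by linarith) (by linarith) (by linarith) (by linarith)
    have h4 := mul_le_mul_of_nonneg_right hha ha
    have h5 : 0 ≤ (δ + a + b) ^ ((p-2)/2) := Real.rpow_nonneg (by linarith) _
    nlinarith [mul_nonneg h5 hb]

lemma sum_low (hp : 1 < p) (hp2 : p ≤ 2) (hδ : 0 ≤ δ) (hb : 0 ≤ b) (ha : 0 ≤ a) :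
    (δ + a + b) ^ ((p-2)/2) * (a + b)
      ≤ (δ + a) ^ ((p-2)/2) * a + (δ + b) ^ ((p-2)/2) * b := by
  have h1 : (δ + a + b) ^ ((p-2)/2) * a ≤ (δ + a) ^ ((p-2)/2) * a := by
    rcases eq_or_lt_of_le (by linarith : (0:ℝ) ≤ δ + a) with h0 | h0
    · have ha0 : a = 0 := by linarith
      simp [ha0]
    · exact mul_le_mul_of_nonneg_right
        (Real.rpow_le_rpow_of_nonpos h0 (by linarith) (by linarith)) ha
  have h2 : (δ + a + b) ^ ((p-2)/2) * b ≤ (δ + b) ^ ((p-2)/2) * b := by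
    rcases eq_or_lt_of_le (by linarith : (0:ℝ) ≤ δ + b) with h0 | h0
    · have hb0 : b = 0 := by linarith
      simp [hb0]
    · exact mul_le_mul_of_nonneg_right
        (Real.rpow_le_rpow_of_nonpos h0 (by linarith) (by linarith)) hb
  nlinarith

lemma diff_up (hp : 1 < p) (hp2 : p ≤ 2) (hδ : 0 ≤ δ) (hb : 0 ≤ b) (hba : b ≤ a) :
    (δ + a) ^ ((p-2)/2) * a - (δ + b) ^ ((p-2)/2) * b
      ≤ 2 * (δ + a + b) ^ ((p-2)/2) * (a - b) := by
  have ha : 0 ≤ a := hb.trans hba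
  rcases eq_or_lt_of_le (by linarith : (0:ℝ) ≤ δ + a) with h0 | h0
  · have hδ0 : δ = 0 := by linarith
    have ha0 : a = 0 := by linarith
    have hb0 : b = 0 := by linarith
    subst hδ0; subst ha0; subst hb0; simp
  · have h2 : (δ + a) ^ ((p-2)/2) * b ≤ (δ + b) ^ ((p-2)/2) * b := by
      rcases eq_or_lt_of_le (by linarith : (0:ℝ) ≤ δ + b) with h1 | h1
      · have hb0 : b = 0 := by linarith
        simp [hb0]
      · exact mul_le_mul_of_nonneg_right
          (Real.rpow_le_rpow_of_nonpos h1 (by linarith) (by linarith)) hb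
    have hha : (δ + a) ^ ((p-2)/2) ≤ 2 * (δ + a + b) ^ ((p-2)/2) :=
      rpow_half_bound (by linarith) (by linarith) (by linarith) (by linarith)
    have h3 := mul_le_mul_of_nonneg_right hha (by linarith : (0:ℝ) ≤ a - b)
    nlinarith

lemma diff_low (hp : 1 < p) (hp2 : p ≤ 2) (hδ : 0 ≤ δ) (hb : 0 ≤ b) (hba : b ≤ a) :
    (p/2) * (δ + a + b) ^ ((p-2)/2) * (a - b)
      ≤ (δ + a) ^ ((p-2)/2) * a - (δ + b) ^ ((p-2)/2) * b := by
  have ha : 0 ≤ a := hb.trans hba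
  rcases eq_or_lt_of_le (by linarith : (0:ℝ) ≤ δ + b) with h0 | h0
  · have hδ0 : δ = 0 := by linarith
    have hb0 : b = 0 := by linarith
    subst hδ0; subst hb0
    simp only [add_zero, zero_add, sub_zero, mul_zero]
    nlinarith [mul_nonneg (Real.rpow_nonneg ha ((p-2)/2)) ha]
  · -- δ + b > 0 : derivative argument on [b, a]
    set e : ℝ := (p-2)/2 with he
    set K : ℝ := (p/2) * (δ + a) ^ e with hK
    have hder : ∀ x ∈ Set.Ioo b a,
        HasDerivAt (fun t => (δ + t) ^ e * t - K * t)
          (1 * e * (δ + x) ^ (e - 1) * x + (δ + x) ^ e * 1 - K) x := by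
      intro x hx
      have hδx : 0 < δ + x := by have := hx.1; linarith
      have h1 : HasDerivAt (fun t : ℝ => δ + t) 1 x := (hasDerivAt_id x).const_add δ
      have h2 : HasDerivAt (fun t : ℝ => (δ + t) ^ e) (1 * e * (δ + x) ^ (e - 1)) x :=
        h1.rpow_const (Or.inl hδx.ne')
      have h3 := h2.mul (hasDerivAt_id x)
      have h4 : HasDerivAt (fun t : ℝ => K * t) K x := by
        simpa using (hasDerivAt_id x).const_mul K
      have h5 := h3.sub h4
      simp only [one_mul, mul_one] at h5 ⊢
      exact h5
    have hmono : MonotoneOn (fun t => (δ + t) ^ e * t - K * t) (Set.Icc b a) := by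
      apply monotoneOn_of_deriv_nonneg (convex_Icc b a)
      · apply ContinuousOn.sub
        · apply ContinuousOn.mul
          · apply ContinuousOn.rpow_const
            · exact (continuous_const.add continuous_id).continuousOn
            · intro x hx
              exact Or.inl (ne_of_gt (by have := hx.1; linarith))
          · exact continuousOn_id
        · exact (continuous_const.mul continuous_id).continuousOn
      · intro x hx
        rw [interior_Icc] at hx
        exact ((hder x hx).differentiableAt).differentiableWithinAt
      · intro x hx
        rw [interior_Icc] at hx
        rw [(hder x hx).deriv]
        have hδx : 0 < δ + x := by have := hx.1; linarith
        have hxe : (δ + x) ^ (e - 1) * (δ + x) = (δ + x) ^ e := by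
          rw [← Real.rpow_add_one hδx.ne']; ring_nf
        have hpe : 0 ≤ (δ + x) ^ (e - 1) := Real.rpow_nonneg hδx.le _
        have h1 : e * ((δ + x) ^ (e - 1) * x) ≥ e * ((δ + x) ^ e) := by
          rw [← hxe]
          apply mul_le_mul_of_nonpos_left _ (by rw [he]; linarith)
          exact mul_le_mul_of_nonneg_left (by linarith) hpe
        have h2 : (δ + a) ^ e ≤ (δ + x) ^ e :=
          Real.rpow_le_rpow_of_nonpos hδx (by have := hx.2; linarith) (by rw [he]; linarith)
        have h3 : (1 + e) = p / 2 := by rw [he]; ring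
        have h4 : 0 ≤ (δ + x) ^ e := Real.rpow_nonneg hδx.le _
        rw [hK]
        nlinarith
    have hba' := hmono (Set.left_mem_Icc.mpr hba) (Set.right_mem_Icc.mpr hba) hba
    simp only at hba'
    have hK2 : (p/2) * (δ + a + b) ^ e ≤ K := by
      rw [hK]
      apply mul_le_mul_of_nonneg_left _ (by linarith)
      exact Real.rpow_le_rpow_of_nonpos (by linarith) (by linarith) (by rw [he]; linarith)
    have hKab := mul_le_mul_of_nonneg_right hK2 (by linarith : (0:ℝ) ≤ a - b)
    nlinarith

lemma sq_half : ∀ y : ℝ, 0 ≤ y → ((y:ℝ) ^ ((p-2)/2)) ^ 2 = y ^ (p - 2) := by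
  intro y hy
  rw [sq_rpow' hy]
  congr 1; ring

-- E1 aux : assuming b ≤ a
lemma E1up_aux (hp : 1 < p) (hp2 : p ≤ 2) (hδ : 0 ≤ δ) (hb : 0 ≤ b) (hba : b ≤ a) :
    ((δ + a) ^ ((p-2)/2) * a - (δ + b) ^ ((p-2)/2) * b) ^ 2
      ≤ 16 * (δ + a + b) ^ (p-2) * (a - b) ^ 2 := by
  have ha : 0 ≤ a := hb.trans hba
  have h1 : 0 ≤ (δ + a) ^ ((p-2)/2) * a - (δ + b) ^ ((p-2)/2) * b :=
    sub_nonneg.mpr (fmono hp hp2 hδ hb hba)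
  have h2 := diff_up hp hp2 hδ hb hba
  have h3 := pow_le_pow_left₀ h1 h2 2
  have h4 : ((δ + a + b) ^ ((p-2)/2)) ^ 2 = (δ + a + b) ^ (p-2) :=
    sq_half _ (by linarith)
  rw [← h4]
  nlinarith [h3, mul_nonneg (sq_nonneg ((δ + a + b) ^ ((p-2)/2))) (sq_nonneg (a-b))]

lemma E1low_aux (hp : 1 < p) (hp2 : p ≤ 2) (hδ : 0 ≤ δ) (hb : 0 ≤ b) (hba : b ≤ a) :
    (p^2/4) * (δ + a + b) ^ (p-2) * (a - b) ^ 2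
      ≤ ((δ + a) ^ ((p-2)/2) * a - (δ + b) ^ ((p-2)/2) * b) ^ 2 := by
  have ha : 0 ≤ a := hb.trans hba
  have h2 := diff_low hp hp2 hδ hb hba
  have h1 : 0 ≤ (p/2) * (δ + a + b) ^ ((p-2)/2) * (a - b) :=
    mul_nonneg (mul_nonneg (by linarith)
      (Real.rpow_nonneg (show (0:ℝ) ≤ δ + a + b by linarith) _)) (by linarith)
  have h3 := pow_le_pow_left₀ h1 h2 2
  have h4 : ((δ + a + b) ^ ((p-2)/2)) ^ 2 = (δ + a + b) ^ (p-2) :=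
    sq_half _ (by linarith)
  rw [← h4]
  nlinarith [h3]

lemma E2up_aux (hp : 1 < p) (hp2 : p ≤ 2) (hδ : 0 ≤ δ) (hb : 0 ≤ b) (hba : b ≤ a) :
    ((δ + a) ^ ((p-2)/2) * a + (δ + b) ^ ((p-2)/2) * b) ^ 2
      ≤ 16 * (δ + a + b) ^ (p-2) * (a + b) ^ 2 := by
  have ha : 0 ≤ a := hb.trans hba
  have h1 : 0 ≤ (δ + a) ^ ((p-2)/2) * a + (δ + b) ^ ((p-2)/2) * b := by
    have := Real.rpow_nonneg (show (0:ℝ) ≤ δ + a by linarith) ((p-2)/2)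
    have := Real.rpow_nonneg (show (0:ℝ) ≤ δ + b by linarith) ((p-2)/2)
    positivity
  have h2 := sum_up hp hp2 hδ hb hba
  have h3 := pow_le_pow_left₀ h1 h2 2
  have h4 : ((δ + a + b) ^ ((p-2)/2)) ^ 2 = (δ + a + b) ^ (p-2) :=
    sq_half _ (by linarith)
  nlinarith

lemma E2low_aux (hp : 1 < p) (hp2 : p ≤ 2) (hδ : 0 ≤ δ) (hb : 0 ≤ b) (hba : b ≤ a) :
    (p^2/4) * (δ + a + b) ^ (p-2) * (a + b) ^ 2
      ≤ ((δ + a) ^ ((p-2)/2) * a + (δ + b) ^ ((p-2)/2) * b) ^ 2 := by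
  have ha : 0 ≤ a := hb.trans hba
  have h1 : 0 ≤ (δ + a + b) ^ ((p-2)/2) * (a + b) := by
    have := Real.rpow_nonneg (show (0:ℝ) ≤ δ + a + b by linarith) ((p-2)/2)
    positivity
  have h2 := sum_low hp hp2 hδ hb ha
  have h3 := pow_le_pow_left₀ h1 h2 2
  have h4 : ((δ + a + b) ^ ((p-2)/2)) ^ 2 = (δ + a + b) ^ (p-2) :=
    sq_half _ (by linarith)
  rw [← h4]
  have hp4 : p^2/4 ≤ 1 := by nlinarith
  have key := mul_le_mul_of_nonneg_right hp4 (sq_nonneg ((δ + a + b) ^ ((p-2)/2) * (a+b)))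
  nlinarith [h3, key]

-- symmetric versions
lemma E1up (hp : 1 < p) (hp2 : p ≤ 2) (hδ : 0 ≤ δ) (ha : 0 ≤ a) (hb : 0 ≤ b) :
    ((δ + a) ^ ((p-2)/2) * a - (δ + b) ^ ((p-2)/2) * b) ^ 2
      ≤ 16 * (δ + a + b) ^ (p-2) * (a - b) ^ 2 := by
  rcases le_total b a with h | h
  · exact E1up_aux hp hp2 hδ hb h
  · have h1 := E1up_aux (a := b) (b := a) hp hp2 hδ ha h
    rw [show δ + b + a = δ + a + b by ring] at h1
    nlinarith

lemma E1low (hp : 1 < p) (hp2 : p ≤ 2) (hδ : 0 ≤ δ) (ha : 0 ≤ a) (hb : 0 ≤ b) :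
    (p^2/4) * (δ + a + b) ^ (p-2) * (a - b) ^ 2
      ≤ ((δ + a) ^ ((p-2)/2) * a - (δ + b) ^ ((p-2)/2) * b) ^ 2 := by
  rcases le_total b a with h | h
  · exact E1low_aux hp hp2 hδ hb h
  · have h1 := E1low_aux (a := b) (b := a) hp hp2 hδ ha h
    rw [show δ + b + a = δ + a + b by ring] at h1
    nlinarith

lemma E2up (hp : 1 < p) (hp2 : p ≤ 2) (hδ : 0 ≤ δ) (ha : 0 ≤ a) (hb : 0 ≤ b) :
    ((δ + a) ^ ((p-2)/2) * a + (δ + b) ^ ((p-2)/2) * b) ^ 2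
      ≤ 16 * (δ + a + b) ^ (p-2) * (a + b) ^ 2 := by
  rcases le_total b a with h | h
  · exact E2up_aux hp hp2 hδ hb h
  · have h1 := E2up_aux (a := b) (b := a) hp hp2 hδ ha h
    rw [show δ + b + a = δ + a + b by ring] at h1
    nlinarith

lemma E2low (hp : 1 < p) (hp2 : p ≤ 2) (hδ : 0 ≤ δ) (ha : 0 ≤ a) (hb : 0 ≤ b) :
    (p^2/4) * (δ + a + b) ^ (p-2) * (a + b) ^ 2
      ≤ ((δ + a) ^ ((p-2)/2) * a + (δ + b) ^ ((p-2)/2) * b) ^ 2 := by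
  rcases le_total b a with h | h
  · exact E2low_aux hp hp2 hδ hb h
  · have h1 := E2low_aux (a := b) (b := a) hp hp2 hδ ha h
    rw [show δ + b + a = δ + a + b by ring] at h1
    nlinarith

lemma linear_bound {u v m x : ℝ} (hm : 0 ≤ m) (hx : x^2 ≤ m^2)
    (h1 : u + v*m ≤ 0) (h2 : u - v*m ≤ 0) : u + v*x ≤ 0 := by
  have hxm : |x| ≤ m := by
    have h := Real.sqrt_le_sqrt hx
    rwa [Real.sqrt_sq_eq_abs, Real.sqrt_sq hm] at h
  rcases abs_le.mp hxm with ⟨hl, hr⟩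
  rcases le_total 0 v with hv | hv
  · nlinarith
  · nlinarith

end scalar

section phi
variable {p δ a d : ℝ}

lemma phiShift_eq (hδ : 0 ≤ δ) (ha : 0 ≤ a) (hd : 0 ≤ d) :
    phiShift p δ a d = ∫ s in (0:ℝ)..d, (δ + a + s) ^ (p-2) * s := by
  unfold phiShift phiN'
  apply intervalIntegral.integral_congr
  intro s hs
  rw [Set.uIcc_of_le hd, Set.mem_Icc] at hs
  obtain ⟨hs0, hsd⟩ := hs
  rcases eq_or_lt_of_le (add_nonneg ha hs0) with h | h
  · have hs' : s = 0 := by linarith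
    simp [hs']
  · show (δ + (a + s)) ^ (p-2) * (a + s) * (s / (a + s)) = (δ + a + s) ^ (p-2) * s
    rw [show δ + (a + s) = δ + a + s by ring]
    field_simp

lemma psi_integrable (hp : 1 < p) (hp2 : p ≤ 2) (hδ : 0 ≤ δ) (ha : 0 ≤ a) (hd : 0 ≤ d) :
    IntervalIntegrable (fun s => (δ + a + s) ^ (p-2) * s) MeasureTheory.volume 0 d := by
  apply MonotoneOn.intervalIntegrable
  have h := monotoneOn_rpow_mul (c := δ + a) (e := p - 2)
    (by linarith) (by linarith) (by linarith)
  have hsub : Set.uIcc (0:ℝ) d ⊆ Set.Ici (0:ℝ) := by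
    rw [Set.uIcc_of_le hd]
    exact fun x hx => hx.1
  exact h.mono hsub

lemma phi_low (hp : 1 < p) (hp2 : p ≤ 2) (hδ : 0 ≤ δ) (ha : 0 ≤ a) (hd : 0 ≤ d) :
    (δ + a + d) ^ (p-2) * (d^2/2) ≤ phiShift p δ a d := by
  rw [phiShift_eq hδ ha hd]
  have hconst : ∫ s in (0:ℝ)..d, (δ + a + d) ^ (p-2) * s
      = (δ + a + d) ^ (p-2) * (d^2/2) := by
    rw [intervalIntegral.integral_const_mul, integral_id]
    norm_num
  rw [← hconst]
  apply intervalIntegral.integral_mono_on hd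
  · exact (Continuous.intervalIntegrable (by continuity) _ _)
  · exact psi_integrable hp hp2 hδ ha hd
  · intro s hs
    obtain ⟨hs0, hsd⟩ := hs
    rcases eq_or_lt_of_le hs0 with h | h
    · simp [← h]
    · have h1 : (δ + a + d) ^ (p-2) ≤ (δ + a + s) ^ (p-2) :=
        Real.rpow_le_rpow_of_nonpos (by linarith) (by linarith) (by linarith)
      exact mul_le_mul_of_nonneg_right h1 hs0

lemma phi_up (hp : 1 < p) (hp2 : p ≤ 2) (hδ : 0 ≤ δ) (ha : 0 ≤ a) (hd : 0 ≤ d) :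
    phiShift p δ a d ≤ 2 * (δ + a + d) ^ (p-2) * d^2 := by
  rcases le_or_gt d (δ + a) with hcase | hcase
  · -- d ≤ δ + a
    rcases eq_or_lt_of_le (by linarith : (0:ℝ) ≤ δ + a) with h0 | h0
    · have hd0 : d = 0 := by linarith
      rw [hd0, phiShift_eq hδ ha (le_refl 0), intervalIntegral.integral_same]
      norm_num
    · rw [phiShift_eq hδ ha hd]
      have step : ∫ s in (0:ℝ)..d, (δ + a + s) ^ (p-2) * s
          ≤ ∫ s in (0:ℝ)..d, (2 * (δ + a + d) ^ (p-2)) * s := by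
        apply intervalIntegral.integral_mono_on hd
        · exact psi_integrable hp hp2 hδ ha hd
        · exact (Continuous.intervalIntegrable (by continuity) _ _)
        · intro s hs
          obtain ⟨hs0, hsd⟩ := hs
          have h1 : (δ + a + s) ^ (p-2) ≤ 2 * (δ + a + d) ^ (p-2) :=
            rpow_half_bound (by linarith) (by linarith) (by linarith) (by linarith)
          exact mul_le_mul_of_nonneg_right h1 hs0
      have hconst : ∫ s in (0:ℝ)..d, (2 * (δ + a + d) ^ (p-2)) * s
          = (δ + a + d) ^ (p-2) * d^2 := by
        rw [intervalIntegral.integral_const_mul, integral_id]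
        ring
      rw [hconst] at step
      have : 0 ≤ (δ + a + d) ^ (p-2) * d^2 := by
        have := Real.rpow_nonneg (show (0:ℝ) ≤ δ + a + d by linarith) (p-2)
        positivity
      linarith
  · -- δ + a < d
    have hd0 : 0 < d := by linarith
    have hT : 0 < δ + a + d := by linarith
    rw [phiShift_eq hδ ha hd]
    have step : ∫ s in (0:ℝ)..d, (δ + a + s) ^ (p-2) * s
        ≤ ∫ _s in (0:ℝ)..d, (δ + a + d) ^ (p-1) := by
      apply intervalIntegral.integral_mono_on hd
      · exact psi_integrable hp hp2 hδ ha hd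
      · exact intervalIntegrable_const
      · intro s hs
        obtain ⟨hs0, hsd⟩ := hs
        rcases eq_or_lt_of_le hs0 with h | h
        · rw [← h]
          simp
          positivity
        · have hbs : 0 < δ + a + s := by linarith
          calc (δ + a + s) ^ (p-2) * s
              ≤ (δ + a + s) ^ (p-2) * (δ + a + s) :=
                mul_le_mul_of_nonneg_left (by linarith)
                  (Real.rpow_nonneg hbs.le _)
            _ = (δ + a + s) ^ (p-1) := by
                rw [show p - 1 = (p-2) + 1 by ring, Real.rpow_add_one hbs.ne']
            _ ≤ (δ + a + d) ^ (p-1) :=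
                Real.rpow_le_rpow hbs.le (by linarith) (by linarith)
    have hconst : ∫ _s in (0:ℝ)..d, (δ + a + d) ^ (p-1) = (δ + a + d) ^ (p-1) * d := by
      rw [intervalIntegral.integral_const]
      simp [mul_comm]
    rw [hconst] at step
    have hsplit : (δ + a + d) ^ (p-1) = (δ + a + d) ^ (p-2) * (δ + a + d) := by
      rw [show p - 1 = (p-2) + 1 by ring, Real.rpow_add_one hT.ne']
    have h2d : δ + a + d ≤ 2 * d := by linarith
    have hnn : 0 ≤ (δ + a + d) ^ (p-2) := Real.rpow_nonneg hT.le _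
    calc ∫ s in (0:ℝ)..d, (δ + a + s) ^ (p-2) * s ≤ (δ + a + d) ^ (p-1) * d := step
      _ = (δ + a + d) ^ (p-2) * (δ + a + d) * d := by rw [hsplit]
      _ ≤ (δ + a + d) ^ (p-2) * (2*d) * d := by
          apply mul_le_mul_of_nonneg_right _ hd
          exact mul_le_mul_of_nonneg_left h2d hnn
      _ = 2 * (δ + a + d) ^ (p-2) * d^2 := by ring

end phi

lemma normF_nonneg (P : Matrix (Fin 3) (Fin 3) ℝ) : 0 ≤ normF P := Real.sqrt_nonneg _

lemma normF_sq (P : Matrix (Fin 3) (Fin 3) ℝ) : normF P ^ 2 = ∑ i, ∑ j, (P i j) ^ 2 :=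
  Real.sq_sqrt (by positivity)

set_option maxHeartbeats 1000000 in
/-- `|F(P)−F(Q)|² ∼ φ_{|P|}(|P−Q|)` with a constant depending only on `p`. -/
theorem stmt_17 (p : ℝ) (hp : 1 < p) (hp2 : p ≤ 2) :
    ∃ c : ℝ, 0 < c ∧
      ∀ δ : ℝ, 0 ≤ δ → ∀ P Q : Matrix (Fin 3) (Fin 3) ℝ, P.IsSymm → Q.IsSymm →
        (normF (Fmap p δ P - Fmap p δ Q)) ^ 2 ≤ c * phiShift p δ (normF P) (normF (P - Q)) ∧
        phiShift p δ (normF P) (normF (P - Q)) ≤ c * (normF (Fmap p δ P - Fmap p δ Q)) ^ 2 := by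
  have hp0 : 0 < p := by linarith
  refine ⟨64 + 16 / p^2, by positivity, ?_⟩
  intro δ hδ P Q _ _
  set a := normF P with ha_def
  set b := normF Q with hb_def
  set d := normF (P - Q) with hd_def
  have ha : 0 ≤ a := normF_nonneg P
  have hb : 0 ≤ b := normF_nonneg Q
  have hd : 0 ≤ d := normF_nonneg (P - Q)
  set x : ℝ := ∑ i, ∑ j, P i j * Q i j with hx_def
  set ga : ℝ := (δ + a) ^ ((p-2)/2) with hga_def
  set gb : ℝ := (δ + b) ^ ((p-2)/2) with hgb_def
  have ha2 : a ^ 2 = ∑ i, ∑ j, (P i j) ^ 2 := normF_sq P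
  have hb2 : b ^ 2 = ∑ i, ∑ j, (Q i j) ^ 2 := normF_sq Q
  have hd2 : d ^ 2 = a^2 + b^2 - 2*x := by
    rw [normF_sq (P - Q), ha2, hb2, hx_def]
    simp only [Matrix.sub_apply, Fin.sum_univ_three]
    ring
  have hF2 : normF (Fmap p δ P - Fmap p δ Q) ^ 2 = ga^2*a^2 + gb^2*b^2 - 2*(ga*gb)*x := by
    rw [normF_sq (Fmap p δ P - Fmap p δ Q), ha2, hb2, hx_def]
    simp only [Fmap, Matrix.sub_apply, Matrix.smul_apply, smul_eq_mul, ← ha_def, ← hb_def,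
      ← hga_def, ← hgb_def, Fin.sum_univ_three]
    ring
  have hCS : x^2 ≤ a^2 * b^2 := by
    have h := Finset.sum_mul_sq_le_sq_mul_sq Finset.univ
      (fun q : Fin 3 × Fin 3 => P q.1 q.2) (fun q : Fin 3 × Fin 3 => Q q.1 q.2)
    simp only [Fintype.sum_prod_type] at h
    rw [ha2, hb2, hx_def]
    exact h
  have habs : |x| ≤ a * b := by
    have h1 : Real.sqrt (x^2) ≤ Real.sqrt (a^2*b^2) := Real.sqrt_le_sqrt hCS
    rwa [Real.sqrt_sq_eq_abs, show a^2*b^2 = (a*b)^2 by ring,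
      Real.sqrt_sq (mul_nonneg ha hb)] at h1
  obtain ⟨hxl, hxr⟩ := abs_le.mp habs
  have hdab : d ≤ a + b := by nlinarith [hd2, hxl, hd, ha, hb]
  have hbad : b ≤ a + d := by nlinarith [hd2, hxr, hd, ha, hb]
  rcases eq_or_lt_of_le (by linarith : (0:ℝ) ≤ δ + a + b) with hzero | hS
  · -- degenerate case
    have ha0 : a = 0 := by linarith
    have hb0 : b = 0 := by linarith
    have hd0 : d = 0 := by linarith
    have hx0 : x = 0 := by nlinarith
    have hphi0 : phiShift p δ a d = 0 := by
      rw [hd0, phiShift, intervalIntegral.integral_same]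
    have hG0 : normF (Fmap p δ P - Fmap p δ Q) ^ 2 = 0 := by
      rw [hF2, ha0, hb0, hx0]; ring
    rw [hphi0, hG0]
    norm_num
  · -- main case
    have hT : 0 < δ + a + d := by
      rcases lt_or_ge 0 (δ + a + d) with h | h
      · exact h
      · exfalso; linarith
    have hSnn : 0 ≤ (δ + a + b) ^ (p-2) := Real.rpow_nonneg hS.le _
    have hTnn : 0 ≤ (δ + a + d) ^ (p-2) := Real.rpow_nonneg hT.le _
    have hST : (δ + a + b) ^ (p-2) ≤ 2 * (δ + a + d) ^ (p-2) :=
      rpow_half_bound (e := p-2) (x := δ + a + b) (y := δ + a + d)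
        (by linarith) (by linarith) hT (by linarith)
    have hTS : (δ + a + d) ^ (p-2) ≤ 2 * (δ + a + b) ^ (p-2) :=
      rpow_half_bound (e := p-2) (x := δ + a + d) (y := δ + a + b)
        (by linarith) (by linarith) hS (by linarith)
    have e1u := E1up hp hp2 hδ ha hb
    have e1l := E1low hp hp2 hδ ha hb
    have e2u := E2up hp hp2 hδ ha hb
    have e2l := E2low hp hp2 hδ ha hb
    rw [← hga_def, ← hgb_def] at e1u e1l e2u e2l
    have hm : 0 ≤ a * b := mul_nonneg ha hb
    have hx2 : x^2 ≤ (a*b)^2 := by linarith [hCS]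
    -- upper bound on G
    have hGup : normF (Fmap p δ P - Fmap p δ Q) ^ 2 ≤ 16*(δ + a + b) ^ (p-2)*(a^2+b^2-2*x) := by
      rw [hF2]
      have key := linear_bound (u := ga^2*a^2+gb^2*b^2-16*(δ + a + b) ^ (p-2)*(a^2+b^2))
        (v := 32*(δ + a + b) ^ (p-2) - 2*(ga*gb)) hm hx2 (by linarith [e1u]) (by linarith [e2u])
      linarith [key]
    have hGlow : (p^2/4)*(δ + a + b) ^ (p-2)*(a^2+b^2-2*x) ≤ normF (Fmap p δ P - Fmap p δ Q) ^ 2 := by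
      rw [hF2]
      have key := linear_bound (u := (p^2/4)*(δ + a + b) ^ (p-2)*(a^2+b^2) - ga^2*a^2 - gb^2*b^2)
        (v := 2*(ga*gb) - (p^2/2)*(δ + a + b) ^ (p-2)) hm hx2 (by linarith [e1l]) (by linarith [e2l])
      linarith [key]
    have hphil := phi_low hp hp2 hδ ha hd
    have hphiu := phi_up hp hp2 hδ ha hd
    have hphinn : 0 ≤ phiShift p δ a d := by
      have := mul_nonneg hTnn (by positivity : (0:ℝ) ≤ d^2/2)
      linarith [hphil]
    have hGnn : 0 ≤ normF (Fmap p δ P - Fmap p δ Q) ^ 2 := sq_nonneg _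
    constructor
    · -- G ≤ c φ
      have h1 : normF (Fmap p δ P - Fmap p δ Q) ^ 2 ≤ 16*(δ + a + b) ^ (p-2)*d^2 := by
        rw [hd2]
        exact hGup
      have h2 : 16*(δ + a + b) ^ (p-2)*d^2 ≤ 32*(δ + a + d) ^ (p-2)*d^2 := by linarith [mul_le_mul_of_nonneg_right hST (sq_nonneg d)]
      have h3 : 32*(δ + a + d) ^ (p-2)*d^2 ≤ 64 * phiShift p δ a d := by linarith [hphil]
      have hex : 0 ≤ 16/p^2 * phiShift p δ a d :=
        mul_nonneg (by positivity) hphinn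
      linarith
    · -- φ ≤ c G
      have h1 : phiShift p δ a d ≤ 4*(δ + a + b) ^ (p-2)*d^2 := by
        linarith [hphiu, mul_le_mul_of_nonneg_right hTS (sq_nonneg d)]
      have h2 : (p^2/4)*(δ + a + b) ^ (p-2)*d^2 ≤ normF (Fmap p δ P - Fmap p δ Q) ^ 2 := by
        rw [hd2]; exact hGlow
      have h3 : 4*(δ + a + b) ^ (p-2)*d^2 ≤ (16/p^2) * normF (Fmap p δ P - Fmap p δ Q) ^ 2 := by
        have h4 := mul_le_mul_of_nonneg_left h2 (by positivity : (0:ℝ) ≤ 16/p^2)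
        have h5 : (16/p^2) * ((p^2/4)*(δ + a + b) ^ (p-2)*d^2) = 4*(δ + a + b) ^ (p-2)*d^2 := by
          field_simp
          ring
        rw [h5] at h4
        exact h4
      have hex : 0 ≤ 64 * normF (Fmap p δ P - Fmap p δ Q) ^ 2 := by positivity
      linarith
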